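/- arXiv:1805.01699 — 2 statements merged into one kernel-verified Lean document; each statement's English description precedes it below -/
import Mathlib

section
/- Let c : E(K⃗_ℕ) → {1,...,r+1} be an edge-colouring of the complete symmetric digraph on ℕ⁺ such that for each i ∈ {1,...,r} there is no directed path of length ℓᵢ in colour i. Then there exists a set A ⊆ ℕ⁺ of upper density at least ∏_{i=1}^r (1/ℓᵢ) such that all edges between distinct elements of A have colour r+1; in particular, there is an infinite directed path in colour r+1 of upper density at least ∏_{i=1}^r (1/ℓᵢ). -/
open scoped Classical

/-- Upper density of a set of positive integers. -/
noncomputable def upperDensity (A : Set ℕ) : ℝ :=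
  Filter.limsup
    (fun n : ℕ => (((Finset.Icc 1 n).filter (fun m => m ∈ A)).card : ℝ) / n)
    Filter.atTop

/-!
Gallai–Roy, in the form: a digraph with no directed path of length `ℓ` has a proper
`ℓ`-colouring. Take a maximal acyclic subrelation `D` of the edge relation (Zorn) and colour `v`
by the length of the longest `D`-walk ending at `v`; in an acyclic relation walks are paths, so
this is `< ℓ`. A `D`-edge raises the colour, and an edge `u → v` outside `D` closes a `D`-cycle,
so there is a `D`-path `v → u` and the colour drops.

Colouring every vertex by the tuple of its Gallai–Roy colours for the first `r` colour classes
partitions `ℕ` into at most `∏ ℓ i` classes, one of which has upper density at least `∏ 1 / ℓ i`.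
Two vertices of one class cannot be joined by an edge of colour `i ≤ r`, and a set of positive
upper density is infinite, so enumerating it in increasing order gives the path.
-/

namespace Relation

variable {V : Type*}

theorem transGen_or_edge {R : V → V → Prop} {u v a b : V}
    (h : TransGen (fun x y => R x y ∨ (x = u ∧ y = v)) a b) :
    TransGen R a b ∨ (ReflTransGen R a u ∧ ReflTransGen R v b) := by
  induction h with
  | single hab =>
    rcases hab with hab | ⟨rfl, rfl⟩
    · exact .inl (.single hab)
    · exact .inr ⟨.refl, .refl⟩
  | tail _ hbc ih =>
    rcases hbc with hbc | ⟨rfl, rfl⟩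
    · rcases ih with hab | ⟨hau, hvb⟩
      · exact .inl (hab.tail hbc)
      · exact .inr ⟨hau, hvb.tail hbc⟩
    · rcases ih with hab | ⟨hau, -⟩
      · exact .inr ⟨hab.to_reflTransGen, .refl⟩
      · exact .inr ⟨hau, .refl⟩

theorem exists_mem_transGen_of_isChain {c : Set (V → V → Prop)}
    (hc : IsChain (· ≤ ·) c) {a b : V} (h : TransGen (fun x y => ∃ R ∈ c, R x y) a b) :
    ∃ R ∈ c, TransGen R a b := by
  induction h with
  | single hab =>
    obtain ⟨R, hR, hab⟩ := hab
    exact ⟨R, hR, .single hab⟩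
  | tail _ hbc ih =>
    obtain ⟨R, hR, hab⟩ := ih
    obtain ⟨S, hS, hbc⟩ := hbc
    rcases hc.total hR hS with hRS | hSR
    · exact ⟨S, hS, (TransGen.mono hRS _ _ hab).tail hbc⟩
    · exact ⟨R, hR, hab.tail (hSR _ _ hbc)⟩

def IsAcyclic (R : V → V → Prop) : Prop := ∀ a, ¬TransGen R a a

def HasPath (E : V → V → Prop) (ℓ : ℕ) : Prop :=
  ∃ v : Fin (ℓ + 1) → V, Function.Injective v ∧ ∀ j : Fin ℓ, E (v j.castSucc) (v j.succ)

theorem exists_maximal_acyclic_le (E : V → V → Prop) :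
    ∃ D ≤ E, IsAcyclic D ∧ ∀ u v, E u v → D u v ∨ ReflTransGen D v u := by
  obtain ⟨D, ⟨hDE, hD⟩, hmax⟩ := zorn_le₀ {D | D ≤ E ∧ IsAcyclic D} fun c hcs hc => by
    refine ⟨fun x y => ∃ R ∈ c, R x y, ⟨fun x y ⟨R, hR, h⟩ => (hcs hR).1 x y h, fun a ha => ?_⟩,
      fun R hR x y h => ⟨R, hR, h⟩⟩
    obtain ⟨R, hR, ha⟩ := exists_mem_transGen_of_isChain hc ha
    exact (hcs hR).2 a ha
  refine ⟨D, hDE, hD, fun u v huv => or_iff_not_imp_right.2 fun hvu => ?_⟩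
  have hD' : IsAcyclic fun x y => D x y ∨ (x = u ∧ y = v) := fun a ha =>
    (transGen_or_edge ha).elim (hD a) fun ⟨hau, hva⟩ => hvu (hva.trans hau)
  exact hmax ⟨fun x y h => h.elim (hDE x y) fun ⟨hx, hy⟩ => hx ▸ hy ▸ huv, hD'⟩
    (fun x y h => .inl h) u v (.inr ⟨rfl, rfl⟩)

theorem transGen_of_walk {D : V → V → Prop} {f : ℕ → V} {m i j : ℕ}
    (hf : ∀ k < m, D (f k) (f (k + 1))) (hij : i < j) (hjm : j ≤ m) :
    TransGen D (f i) (f j) :=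
  (transGen_of_succ_of_lt (fun a b => D (f a) (f b))
    (fun k hk => by simpa using hf k (by simp at hk; omega)) hij).lift f fun _ _ h => h

theorem IsAcyclic.hasPath_of_walk {D E : V → V → Prop} (hD : IsAcyclic D) (hDE : D ≤ E)
    {f : ℕ → V} {m ℓ : ℕ} (hf : ∀ k < m, D (f k) (f (k + 1))) (hℓ : ℓ ≤ m) : HasPath E ℓ := by
  refine ⟨fun j => f j, fun i j (hij : f i = f j) => ?_, fun j => hDE _ _ (hf j (by omega))⟩
  by_contra hne
  rcases lt_or_gt_of_ne (Fin.val_injective.ne hne) with h | h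
  · exact hD _ (hij ▸ transGen_of_walk hf h (by omega))
  · exact hD _ (hij ▸ transGen_of_walk hf h (by omega))

def HasWalkTo (D : V → V → Prop) (m : ℕ) (v : V) : Prop :=
  ∃ f : ℕ → V, f m = v ∧ ∀ k < m, D (f k) (f (k + 1))

theorem hasWalkTo_zero (D : V → V → Prop) (v : V) : HasWalkTo D 0 v :=
  ⟨fun _ => v, rfl, fun k hk => absurd hk (Nat.not_lt_zero k)⟩

theorem HasWalkTo.snoc {D : V → V → Prop} {m : ℕ} {u v : V} (hu : HasWalkTo D m u)
    (huv : D u v) : HasWalkTo D (m + 1) v := by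
  obtain ⟨f, rfl, hf⟩ := hu
  refine ⟨Function.update f (m + 1) v, by simp, fun k hk => ?_⟩
  rcases Nat.lt_succ_iff_lt_or_eq.1 hk with hk | rfl
  · simpa [Function.update_of_ne (by omega : k ≠ m + 1),
      Function.update_of_ne (by omega : k + 1 ≠ m + 1)] using hf k hk
  · simpa [Function.update_of_ne (by omega : k ≠ k + 1)] using huv

noncomputable def walkHeight (D : V → V → Prop) (v : V) : ℕ :=
  sSup {m | HasWalkTo D m v}

section Bounded

variable {D : V → V → Prop} {ℓ : ℕ} (hbd : ∀ {m v}, HasWalkTo D m v → m < ℓ)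
include hbd

theorem bddAbove_hasWalkTo (v : V) : BddAbove {m | HasWalkTo D m v} :=
  ⟨ℓ, fun _ hm => (hbd hm).le⟩

theorem hasWalkTo_walkHeight (v : V) : HasWalkTo D (walkHeight D v) v :=
  Nat.sSup_mem ⟨0, hasWalkTo_zero D v⟩ (bddAbove_hasWalkTo hbd v)

theorem walkHeight_lt (v : V) : walkHeight D v < ℓ :=
  hbd (hasWalkTo_walkHeight hbd v)

theorem walkHeight_lt_walkHeight_of_rel {u v : V} (huv : D u v) :
    walkHeight D u < walkHeight D v :=
  Nat.lt_of_succ_le <| le_csSup (bddAbove_hasWalkTo hbd v) ((hasWalkTo_walkHeight hbd u).snoc huv)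

theorem walkHeight_lt_walkHeight {u v : V} (huv : TransGen D u v) :
    walkHeight D u < walkHeight D v := by
  induction huv with
  | single h => exact walkHeight_lt_walkHeight_of_rel hbd h
  | tail _ h ih => exact ih.trans (walkHeight_lt_walkHeight_of_rel hbd h)

end Bounded

theorem exists_fin_coloring_of_not_hasPath {E : V → V → Prop} {ℓ : ℕ} (hE : ¬HasPath E ℓ) :
    ∃ φ : V → Fin ℓ, ∀ u v, u ≠ v → E u v → φ u ≠ φ v := by
  obtain ⟨D, hDE, hD, hmax⟩ := exists_maximal_acyclic_le E
  have hbd : ∀ {m v}, HasWalkTo D m v → m < ℓ := fun ⟨_, _, hf⟩ =>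
    Nat.lt_of_not_le fun hℓ => hE (hD.hasPath_of_walk hDE hf hℓ)
  refine ⟨fun v => ⟨walkHeight D v, walkHeight_lt hbd v⟩, fun u v hne huv => ?_⟩
  rw [Ne, Fin.mk.injEq]
  rcases hmax u v huv with h | h
  · exact (walkHeight_lt_walkHeight_of_rel hbd h).ne
  · exact (walkHeight_lt_walkHeight hbd
      ((reflTransGen_iff_eq_or_transGen.1 h).resolve_left hne)).ne'

end Relation

open Relation

section Density

open Filter Finset

noncomputable def densityRatio (A : Set ℕ) (n : ℕ) : ℝ :=
  (((Finset.Icc 1 n).filter (fun m => m ∈ A)).card : ℝ) / n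

theorem densityRatio_nonneg (A : Set ℕ) (n : ℕ) : 0 ≤ densityRatio A n := by
  unfold densityRatio; positivity

theorem densityRatio_le_div_ncard {A : Set ℕ} (hA : A.Finite) (n : ℕ) :
    densityRatio A n ≤ A.ncard / n := by
  unfold densityRatio
  gcongr
  rw [← Set.ncard_coe_finset]
  exact_mod_cast Set.ncard_le_ncard (fun m hm => (Finset.mem_filter.1 hm).2) hA

theorem densityRatio_le_one (A : Set ℕ) (n : ℕ) : densityRatio A n ≤ 1 := by
  unfold densityRatio
  refine div_le_one_of_le₀ ?_ n.cast_nonneg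
  exact_mod_cast (card_filter_le _ _).trans (by simp)

theorem le_upperDensity_of_frequently {A : Set ℕ} {a : ℝ}
    (h : ∃ᶠ n in atTop, a ≤ densityRatio A n) : a ≤ upperDensity A :=
  le_limsup_of_frequently_le h (isBoundedUnder_of ⟨1, densityRatio_le_one A⟩)

theorem Set.Finite.upperDensity_eq_zero {A : Set ℕ} (hA : A.Finite) : upperDensity A = 0 :=
  (tendsto_of_tendsto_of_tendsto_of_le_of_le tendsto_const_nhds
    (tendsto_const_div_atTop_nhds_zero_nat (A.ncard : ℝ)) (densityRatio_nonneg A)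
    (densityRatio_le_div_ncard hA)).limsup_eq

theorem Set.infinite_of_upperDensity_pos {A : Set ℕ} (hA : 0 < upperDensity A) : A.Infinite :=
  fun hfin => hA.ne' hfin.upperDensity_eq_zero

theorem sum_densityRatio_preimage {X : Type*} [Fintype X] (Φ : ℕ → X) {n : ℕ} (hn : n ≠ 0) :
    ∑ x, densityRatio (Φ ⁻¹' {x}) n = 1 := by
  have hcard := card_eq_sum_card_fiberwise (f := Φ) (s := Icc 1 n) (t := univ)
    fun _ _ => mem_coe.2 (mem_univ _)
  simp only [densityRatio, ← sum_div, Set.mem_preimage, Set.mem_singleton_iff]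
  rw [div_eq_one_iff_eq (by exact_mod_cast hn)]
  rw [Nat.card_Icc, Nat.add_sub_cancel] at hcard
  exact_mod_cast hcard.symm

theorem exists_le_upperDensity_preimage {X : Type*} [Fintype X] (Φ : ℕ → X) :
    ∃ x, (Fintype.card X : ℝ)⁻¹ ≤ upperDensity (Φ ⁻¹' {x}) := by
  have : Nonempty X := ⟨Φ 0⟩
  have hlarge : ∀ n ≠ 0, ∃ x, (Fintype.card X : ℝ)⁻¹ ≤ densityRatio (Φ ⁻¹' {x}) n := by
    intro n hn
    obtain ⟨x, -, hx⟩ := exists_le_of_sum_le univ_nonempty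
      (f := fun _ => (Fintype.card X : ℝ)⁻¹) (g := fun x => densityRatio (Φ ⁻¹' {x}) n)
      (by simp [sum_densityRatio_preimage Φ hn])
    exact ⟨x, hx⟩
  obtain ⟨x, hx⟩ := frequently_exists.1
    ((eventually_ne_atTop 0).mono hlarge).frequently
  exact ⟨x, le_upperDensity_of_frequently hx⟩

end Density

theorem Set.Pairwise.exists_injective_chain_range_eq {A : Set ℕ} {R : ℕ → ℕ → Prop}
    (hR : A.Pairwise R) (hA : A.Infinite) :
    ∃ v : ℕ → ℕ, Function.Injective v ∧ (∀ i, R (v i) (v (i + 1))) ∧ Set.range v = A :=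
  ⟨Nat.nth (· ∈ A), Nat.nth_injective hA,
    fun i => hR (Nat.nth_mem_of_infinite hA i) (Nat.nth_mem_of_infinite hA (i + 1))
      ((Nat.nth_injective hA).ne i.succ_ne_self.symm),
    Nat.range_nth_of_infinite hA⟩

theorem stmt6_general (r : ℕ) (ℓ : Fin r → ℕ)
    (c : ℕ → ℕ → Fin (r + 1))
    (hc : ∀ i : Fin r, ¬∃ v : Fin (ℓ i + 1) → ℕ, Function.Injective v ∧
      ∀ j : Fin (ℓ i), c (v j.castSucc) (v j.succ) = i.castSucc) :
    (∃ A : Set ℕ, (∏ i, (1 : ℝ) / ℓ i) ≤ upperDensity A ∧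
      ∀ m ∈ A, ∀ n ∈ A, m ≠ n → c m n = Fin.last r) ∧
    ∃ v : ℕ → ℕ, Function.Injective v ∧
      (∀ i : ℕ, c (v i) (v (i + 1)) = Fin.last r) ∧
      (∏ i, (1 : ℝ) / ℓ i) ≤ upperDensity (Set.range v) := by
  choose φ hφ using fun i =>
    exists_fin_coloring_of_not_hasPath (E := fun m n => c m n = Fin.castSucc i) (hc i)
  obtain ⟨x, hx⟩ := exists_le_upperDensity_preimage fun n i => φ i n
  set A := (fun n i => φ i n) ⁻¹' {x}
  have hprod : ∏ i, (1 : ℝ) / ℓ i = (Fintype.card ((i : Fin r) → Fin (ℓ i)) : ℝ)⁻¹ := by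
    simp [Fintype.card_pi]
  have hmono : A.Pairwise fun m n => c m n = Fin.last r := by
    intro m hm n hn hmn
    obtain ⟨i, hi⟩ | h := (c m n).eq_castSucc_or_eq_last
    · exact absurd (congrFun (hm.trans hn.symm) i) (hφ i m n hmn hi)
    · exact h
  have : Nonempty ((i : Fin r) → Fin (ℓ i)) := ⟨x⟩
  have hinf : A.Infinite := Set.infinite_of_upperDensity_pos <|
    (inv_pos.2 (Nat.cast_pos.2 Fintype.card_pos)).trans_le hx
  obtain ⟨v, hv, hvc, hvA⟩ := hmono.exists_injective_chain_range_eq hinf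
  exact ⟨⟨A, hprod ▸ hx, hmono⟩, v, hv, hvc, hvA ▸ hprod ▸ hx⟩

/-- Let `c` be an `(r+1)`-edge-colouring of the complete symmetric digraph on
the positive integers such that for each `i ∈ [r]` there is no directed path of
length `ℓ i` in colour `i`. Then there is a set `A` of upper density at least
`∏ i, 1 / ℓ i` all of whose internal edges have colour `r + 1`; in particular
there is an infinite directed path in colour `r + 1` of upper density at least
`∏ i, 1 / ℓ i`. -/
theorem stmt6 (r : ℕ) (ℓ : Fin r → ℕ) (hℓ : ∀ i, 0 < ℓ i)
    (c : ℕ → ℕ → Fin (r + 1))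
    (hc : ∀ i : Fin r, ¬∃ v : Fin (ℓ i + 1) → ℕ, Function.Injective v ∧
      ∀ j : Fin (ℓ i), c (v j.castSucc) (v j.succ) = i.castSucc) :
    (∃ A : Set ℕ, (∏ i, (1 : ℝ) / ℓ i) ≤ upperDensity A ∧
      ∀ m ∈ A, ∀ n ∈ A, m ≠ n → c m n = Fin.last r) ∧
    ∃ v : ℕ → ℕ, Function.Injective v ∧
      (∀ i : ℕ, c (v i) (v (i + 1)) = Fin.last r) ∧
      (∏ i, (1 : ℝ) / ℓ i) ≤ upperDensity (Set.range v) :=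
  stmt6_general r ℓ c hc
end

section
/- Suppose ℕ⁺ is partitioned into finitely many infinite sets U₁,...,U_N such that for each pair p ≠ q, between U_p and U_q either there is an infinite matching of edges of colour r+1 (in a given colouring of the complete symmetric digraph), or some finite vertex set meets all [U_p,U_q]-edges of colour r+1. If additionally every directed path of colour r+1 has upper density at most 1/N and each Uᵢ has upper density exactly 1/N and spans a complete symmetric digraph of colour r+1, then the auxiliary digraph on {U₁,...,U_N} — with an edge (U_p,U_q) when, after removing finitely many vertices, every remaining [U_p,U_q]-edge has colour in {1,...,r} — has the property that its complement in K⃗_N contains no directed cycle. -/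
/-!
Suppose the complement contains a cycle `p₀ → p₁ → ⋯ → pₘ → p₀`. No finite set meets all
colour-`(r+1)` edges from `U pᵢ` to `U pᵢ₊₁`, so each consecutive pair carries an infinite
matching of colour `r + 1`. Going round the cycle, sweeping up the next unvisited vertices of the
current class (a colour-`(r+1)` clique) and leaving along a matching edge that avoids everything
visited so far, gives an injective path of colour `r + 1` that covers every class on the cycle.
Its complement lies in the remaining `N - 2` classes; as upper density is subadditive and
`d(A) + d(Aᶜ) ≥ 1`, the path has upper density at least `2 / N > 1 / N`.
-/

open scoped Classical

/-- A digraph (given by its edge relation `R`) contains a directed cycle. -/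
def HasCycle {V : Type*} (R : V → V → Prop) : Prop :=
  ∃ (m : ℕ) (v : Fin (m + 1) → V), Function.Injective v ∧
    (∀ i : Fin m, R (v i.castSucc) (v i.succ)) ∧ R (v (Fin.last m)) (v 0)

open Filter Function

namespace UpperDensity

/-- `upperDensity A` is by definition `limsup (countingRatio A) atTop`. -/
noncomputable def countingRatio (A : Set ℕ) (n : ℕ) : ℝ :=
  (((Finset.Icc 1 n).filter (fun m => m ∈ A)).card : ℝ) / n

theorem countingRatio_nonneg (A : Set ℕ) (n : ℕ) : 0 ≤ countingRatio A n := by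
  unfold countingRatio; positivity

theorem countingRatio_le_one (A : Set ℕ) (n : ℕ) : countingRatio A n ≤ 1 := by
  unfold countingRatio
  refine div_le_one_of_le₀ ?_ n.cast_nonneg
  exact_mod_cast (Finset.card_filter_le _ _).trans (Nat.card_Icc 1 n).le

theorem countingRatio_mono {A B : Set ℕ} (h : A ⊆ B) (n : ℕ) :
    countingRatio A n ≤ countingRatio B n := by
  unfold countingRatio
  gcongr

theorem countingRatio_union_le (A B : Set ℕ) (n : ℕ) :
    countingRatio (A ∪ B) n ≤ countingRatio A n + countingRatio B n := by
  unfold countingRatio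
  rw [← add_div]
  gcongr
  simp only [Set.mem_union, Finset.filter_or]
  exact_mod_cast Finset.card_union_le _ _

theorem countingRatio_add_compl (A : Set ℕ) {n : ℕ} (hn : 1 ≤ n) :
    countingRatio A n + countingRatio Aᶜ n = 1 := by
  unfold countingRatio
  rw [← add_div, div_eq_one_iff_eq (by positivity)]
  norm_cast
  simpa using Finset.card_filter_add_card_filter_not (s := Finset.Icc 1 n) (· ∈ A)

theorem isBoundedUnder_le (A : Set ℕ) : IsBoundedUnder (· ≤ ·) atTop (countingRatio A) :=
  isBoundedUnder_of ⟨1, countingRatio_le_one A⟩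

theorem isBoundedUnder_ge (A : Set ℕ) : IsBoundedUnder (· ≥ ·) atTop (countingRatio A) :=
  isBoundedUnder_of ⟨0, countingRatio_nonneg A⟩

theorem isCoboundedUnder_le (A : Set ℕ) : IsCoboundedUnder (· ≤ ·) atTop (countingRatio A) :=
  (isBoundedUnder_ge A).isCoboundedUnder_le

end UpperDensity

open UpperDensity

theorem upperDensity_mono {A B : Set ℕ} (h : A ⊆ B) : upperDensity A ≤ upperDensity B :=
  limsup_le_limsup (Eventually.of_forall (countingRatio_mono h)) (isCoboundedUnder_le A)
    (isBoundedUnder_le B)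

theorem upperDensity_union_le (A B : Set ℕ) :
    upperDensity (A ∪ B) ≤ upperDensity A + upperDensity B :=
  calc upperDensity (A ∪ B) ≤ limsup (countingRatio A + countingRatio B) atTop :=
        limsup_le_limsup (Eventually.of_forall (countingRatio_union_le A B))
          (isCoboundedUnder_le _) (isBoundedUnder_le_add (isBoundedUnder_le A) (isBoundedUnder_le B))
    _ ≤ upperDensity A + upperDensity B :=
        limsup_add_le (isBoundedUnder_ge A) (isBoundedUnder_le A) (isCoboundedUnder_le B)
          (isBoundedUnder_le B)

theorem upperDensity_empty : upperDensity ∅ = 0 := by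
  simp [upperDensity]

theorem upperDensity_biUnion_le {ι : Type*} (s : Finset ι) (U : ι → Set ℕ) :
    upperDensity (⋃ i ∈ s, U i) ≤ ∑ i ∈ s, upperDensity (U i) := by
  induction s using Finset.induction_on with
  | empty => simp [upperDensity_empty]
  | insert i s hi ih =>
    rw [Finset.set_biUnion_insert, Finset.sum_insert hi]
    exact (upperDensity_union_le _ _).trans (by gcongr)

theorem one_le_upperDensity_add_compl (A : Set ℕ) : 1 ≤ upperDensity A + upperDensity Aᶜ := by
  calc (1 : ℝ) = limsup (countingRatio A + countingRatio Aᶜ) atTop := by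
        rw [Pi.add_def, limsup_congr ((eventually_ge_atTop 1).mono
          fun n hn => countingRatio_add_compl A hn), limsup_const]
    _ ≤ upperDensity A + upperDensity Aᶜ :=
        limsup_add_le (isBoundedUnder_ge A) (isBoundedUnder_le A) (isCoboundedUnder_le _)
          (isBoundedUnder_le _)

theorem one_sub_mul_le_upperDensity {ι : Type*} [Fintype ι] {U : ι → Set ℕ}
    (hcover : ∀ n, ∃ i, n ∈ U i) {d : ℝ} (hU : ∀ i, upperDensity (U i) ≤ d) {s : Finset ι}
    {A : Set ℕ} (hA : ∀ i ∈ s, U i ⊆ A) :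
    1 - (Fintype.card ι - s.card) * d ≤ upperDensity A := by
  have hcompl : Aᶜ ⊆ ⋃ i ∈ sᶜ, U i := by
    intro n hn
    obtain ⟨i, hi⟩ := hcover n
    exact Set.mem_biUnion (Finset.mem_compl.2 fun hs => hn (hA i hs hi)) hi
  have hsum : ∑ i ∈ sᶜ, upperDensity (U i) ≤ (Fintype.card ι - s.card) * d := by
    have h := Finset.sum_le_card_nsmul sᶜ _ d fun i _ => hU i
    rwa [nsmul_eq_mul, Finset.card_compl, Nat.cast_sub (Finset.card_le_univ s)] at h
  linarith [one_le_upperDensity_add_compl A, upperDensity_mono hcompl,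
    upperDensity_biUnion_le sᶜ U]

theorem HasCycle.exists_forall_rel_add_one {V : Type*} {R : V → V → Prop} (h : HasCycle R) :
    ∃ (m : ℕ) (v : Fin (m + 1) → V), ∀ i, R (v i) (v (i + 1)) := by
  obtain ⟨m, v, -, hstep, hlast⟩ := h
  refine ⟨m, v, Fin.lastCases ?_ fun i => ?_⟩
  · rwa [Fin.last_add_one]
  · rw [Fin.coeSucc_eq_succ]
    exact hstep i

section PrefixLimit

variable {α : Type*} {E : α → α → Prop}

theorem exists_injective_chain_of_isPrefix (L : ℕ → List α) (hpre : ∀ s, L s <+: L (s + 1))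
    (hlen : ∀ s, s < (L s).length) (hnd : ∀ s, (L s).Nodup) (hch : ∀ s, (L s).IsChain E) :
    ∃ v : ℕ → α, Injective v ∧ (∀ n, E (v n) (v (n + 1))) ∧ ∀ s, ∀ x ∈ L s, x ∈ Set.range v := by
  have hmono : ∀ {s s'}, s ≤ s' → L s <+: L s' := by
    intro s s' h
    induction h with
    | refl => exact List.prefix_refl _
    | step _ ih => exact ih.trans (hpre _)
  set v : ℕ → α := fun n => (L n)[n]'(hlen n)
  have hv : ∀ s n (h : n < (L s).length), (L s)[n] = v n := by
    intro s n h
    rcases le_total n s with hns | hsn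
    · exact ((hmono hns).getElem (hlen n)).symm
    · exact (hmono hsn).getElem h
  refine ⟨v, fun n m hnm => ?_, fun n => ?_, fun s x hx => ?_⟩
  · have hK := hlen (n + m)
    rw [← hv (n + m) n (by omega), ← hv (n + m) m (by omega)] at hnm
    exact (hnd _).getElem_inj_iff.1 hnm
  · have hK := hlen (n + 1)
    have h := (hch (n + 1)).getElem n (by omega)
    rwa [hv, hv] at h
  · obtain ⟨j, hj, rfl⟩ := List.getElem_of_mem hx
    exact ⟨j, (hv s j hj).symm⟩

theorem nodup_isChain_append_of_isClique {S : Set α} (hS : ∀ x ∈ S, ∀ y ∈ S, x ≠ y → E x y)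
    {l l' : List α} (hl : l.Nodup ∧ l.IsChain E) (hl' : l'.Nodup ∧ l'.IsChain E)
    (hdisj : ∀ x ∈ l, x ∉ l') (hlast : ∀ x ∈ l.getLast?, x ∈ S) (hhead : ∀ y ∈ l'.head?, y ∈ S) :
    (l ++ l').Nodup ∧ (l ++ l').IsChain E := by
  refine ⟨List.nodup_append.2 ⟨hl.1, hl'.1, fun x hx y hy h => hdisj x hx (h ▸ hy)⟩,
    hl.2.append hl'.2 fun x hx y hy => hS x (hlast x hx) y (hhead y hy) ?_⟩
  rintro rfl
  exact hdisj x (List.mem_of_mem_getLast? hx) (List.mem_of_mem_head? hy)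

theorem forall_mem_getLast?_append {p : α → Prop} {l l' : List α}
    (h : ∀ x ∈ l.getLast?, p x) (h' : ∀ x ∈ l', p x) : ∀ x ∈ (l ++ l').getLast?, p x := by
  intro x hx
  rw [List.getLast?_append] at hx
  rcases hl' : l'.getLast? with _ | y
  · simp only [hl', Option.none_or] at hx
    exact h x hx
  · simp only [hl', Option.some_or, Option.mem_def, Option.some.injEq] at hx
    exact hx ▸ h' y (List.mem_of_mem_getLast? hl')

end PrefixLimit

section CyclicPath

open Fin.NatCast Fin.CommRing

noncomputable def freshIndex (a b : ℕ → ℕ) (l : List ℕ) : ℕ := sInf {j | a j ∉ l ∧ b j ∉ l}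

theorem freshIndex_spec {a b : ℕ → ℕ} (ha : Injective a) (hb : Injective b) (l : List ℕ) :
    a (freshIndex a b l) ∉ l ∧ b (freshIndex a b l) ∉ l := by
  have hfin : ({j | a j ∈ l} ∪ {j | b j ∈ l}).Finite :=
    (l.finite_toSet.preimage ha.injOn).union (l.finite_toSet.preimage hb.injOn)
  obtain ⟨j, hj⟩ := hfin.infinite_compl.nonempty
  exact Nat.sInf_mem (s := {j | a j ∉ l ∧ b j ∉ l}) ⟨j, by simpa [not_or] using hj⟩

variable {t : ℕ} [NeZero t] (W : Fin t → Set ℕ) (a b : Fin t → ℕ → ℕ)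

noncomputable def cyclicStep (i : Fin t) (k : ℕ) (l : List ℕ) : List ℕ :=
  let l₁ := l ++ ((Finset.range (k + 1)).filter fun x => x ∈ W i ∧ x ∉ l).toList
  l₁ ++ [a i (freshIndex (a i) (b i) l₁), b i (freshIndex (a i) (b i) l₁)]

noncomputable def cyclicPath : ℕ → List ℕ
  | 0 => [a 0 0]
  | s + 1 => cyclicStep W a b s s (cyclicPath s)

variable {W a b} {E : ℕ → ℕ → Prop} (hE : ∀ i, ∀ x ∈ W i, ∀ y ∈ W i, x ≠ y → E x y)
  (ha : ∀ i, Injective (a i)) (hb : ∀ i, Injective (b i))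
  (hab : ∀ i j, a i j ∈ W i ∧ b i j ∈ W (i + 1) ∧ E (a i j) (b i j))
  (hW : ∀ i, ∀ x ∈ W i, x ∉ W (i + 1))

include hE ha hb hab hW in
theorem cyclicStep_spec (i : Fin t) (k : ℕ) {l : List ℕ} (hl : l.Nodup ∧ l.IsChain E)
    (hlast : ∀ x ∈ l.getLast?, x ∈ W i) :
    ((cyclicStep W a b i k l).Nodup ∧ (cyclicStep W a b i k l).IsChain E) ∧
      (∀ x ∈ (cyclicStep W a b i k l).getLast?, x ∈ W (i + 1)) ∧
      ∀ x ∈ W i, x ≤ k → x ∈ cyclicStep W a b i k l := by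
  set fresh := ((Finset.range (k + 1)).filter fun x => x ∈ W i ∧ x ∉ l).toList
  have hfresh : ∀ x ∈ fresh, x ∈ W i ∧ x ∉ l := by simp [fresh]
  set l₁ := l ++ fresh
  have h₁ : l₁.Nodup ∧ l₁.IsChain E :=
    nodup_isChain_append_of_isClique (hE i) hl
      ⟨Finset.nodup_toList _, ((Finset.nodup_toList _).imp_of_mem fun hx hy hxy =>
        hE i _ (hfresh _ hx).1 _ (hfresh _ hy).1 hxy).isChain⟩
      (fun x hx hx' => (hfresh x hx').2 hx) hlast
      (fun y hy => (hfresh y (List.mem_of_mem_head? hy)).1)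
  obtain ⟨haj, hbj⟩ := freshIndex_spec (ha i) (hb i) l₁
  obtain ⟨hai, hbi, hE'⟩ := hab i (freshIndex (a i) (b i) l₁)
  have hne : a i (freshIndex (a i) (b i) l₁) ≠ b i (freshIndex (a i) (b i) l₁) :=
    fun h => hW i _ hai (h ▸ hbi)
  refine ⟨nodup_isChain_append_of_isClique (hE i) h₁ ⟨by simpa using hne, by simpa using hE'⟩
    ?_ ?_ (by simpa using hai), by simp only [cyclicStep]; simpa using hbi, fun x hx hxk => ?_⟩
  · intro x hx hx'
    rcases List.mem_pair.1 hx' with rfl | rfl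
    exacts [haj hx, hbj hx]
  · exact forall_mem_getLast?_append hlast fun x hx => (hfresh x hx).1
  · by_cases hxl : x ∈ l
    · simp [cyclicStep, hxl]
    · simp [cyclicStep, hx, hxl, Nat.lt_succ_of_le hxk]

include hE ha hb hab hW in
theorem cyclicPath_spec (s : ℕ) :
    ((cyclicPath W a b s).Nodup ∧ (cyclicPath W a b s).IsChain E) ∧
      ∀ x ∈ (cyclicPath W a b s).getLast?, x ∈ W s := by
  induction s with
  | zero => simpa [cyclicPath] using (hab 0 0).1
  | succ s ih =>
    obtain ⟨hl, hlast, -⟩ := cyclicStep_spec hE ha hb hab hW s s ih.1 ih.2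
    exact ⟨hl, by rw [Nat.cast_succ]; exact hlast⟩

include hE ha hb hab hW in
theorem mem_cyclicPath {i : Fin t} {x : ℕ} (hx : x ∈ W i) :
    x ∈ cyclicPath W a b (i + t * x + 1) := by
  set s := (i : ℕ) + t * x
  have hs : (s : Fin t) = i := by simp [s]
  obtain ⟨hl, hlast⟩ := cyclicPath_spec hE ha hb hab hW s
  exact (cyclicStep_spec hE ha hb hab hW s s hl hlast).2.2 x (hs ▸ hx)
    (le_add_left (Nat.le_mul_of_pos_left x (NeZero.pos t)))

theorem cyclicPath_isPrefix_succ (s : ℕ) : cyclicPath W a b s <+: cyclicPath W a b (s + 1) :=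
  (List.prefix_append _ _).trans (List.prefix_append _ _)

theorem lt_length_cyclicPath (s : ℕ) : s < (cyclicPath W a b s).length := by
  induction s with
  | zero => simp [cyclicPath]
  | succ s ih =>
    simp only [cyclicPath, cyclicStep, List.length_append, List.length_cons, List.length_nil]
    omega

include hE ha hb hab hW in
theorem exists_injective_cyclic_path :
    ∃ v : ℕ → ℕ, Injective v ∧ (∀ n, E (v n) (v (n + 1))) ∧ ∀ i, W i ⊆ Set.range v := by
  obtain ⟨v, hv, hvE, hL⟩ := exists_injective_chain_of_isPrefix (cyclicPath W a b)
    cyclicPath_isPrefix_succ lt_length_cyclicPath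
    (fun s => (cyclicPath_spec hE ha hb hab hW s).1.1)
    (fun s => (cyclicPath_spec hE ha hb hab hW s).1.2)
  exact ⟨v, hv, hvE, fun i x hx => hL _ x (mem_cyclicPath hE ha hb hab hW hx)⟩

end CyclicPath

theorem stmt16_general (r N : ℕ) (c : ℕ → ℕ → Fin (r + 1))
    (U : Fin N → Set ℕ)
    (hpart : ∀ n : ℕ, ∃! p : Fin N, n ∈ U p)
    (hmatch : ∀ p q : Fin N, p ≠ q →
      (∃ a b : ℕ → ℕ, Function.Injective a ∧ Function.Injective b ∧
        ∀ i : ℕ, a i ∈ U p ∧ b i ∈ U q ∧ c (a i) (b i) = Fin.last r) ∨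
      (∃ F : Finset ℕ, ∀ x ∈ U p, ∀ y ∈ U q,
        c x y = Fin.last r → x ∈ F ∨ y ∈ F))
    (hdens : ∀ v : ℕ → ℕ, Function.Injective v →
      (∀ i : ℕ, c (v i) (v (i + 1)) = Fin.last r) →
      upperDensity (Set.range v) ≤ 1 / N)
    (hUdens : ∀ p, upperDensity (U p) = 1 / N)
    (hclique : ∀ p, ∀ x ∈ U p, ∀ y ∈ U p, x ≠ y → c x y = Fin.last r) :
    ¬HasCycle (fun p q : Fin N =>
      p ≠ q ∧ ¬∃ F : Finset ℕ, ∀ x ∈ U p, ∀ y ∈ U q,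
        x ∉ F → y ∉ F → c x y ≠ Fin.last r) := by
  intro hcycle
  obtain ⟨m, p, hp⟩ := hcycle.exists_forall_rel_add_one
  have hmatching (i : Fin (m + 1)) : ∃ a b : ℕ → ℕ, Function.Injective a ∧
      Function.Injective b ∧ ∀ j, a j ∈ U (p i) ∧ b j ∈ U (p (i + 1)) ∧
        c (a j) (b j) = Fin.last r :=
    (hmatch _ _ (hp i).1).resolve_right fun ⟨F, hF⟩ =>
      (hp i).2 ⟨F, fun x hx y hy hxF hyF hc => (hF x hx y hy hc).elim hxF hyF⟩
  choose a b ha hb hab using hmatching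
  obtain ⟨v, hv, hvc, hvU⟩ := exists_injective_cyclic_path (W := fun i => U (p i))
    (fun i => hclique (p i)) ha hb hab
    fun i x hx hx' => (hp i).1 ((hpart x).unique hx hx')
  have hp01 : p 0 ≠ p 1 := by simpa using (hp 0).1
  have hlow := one_sub_mul_le_upperDensity (fun n => (hpart n).exists) (fun q => (hUdens q).le)
    (s := {p 0, p 1}) (A := Set.range v) (by simpa using ⟨hvU 0, hvU 1⟩)
  rw [Finset.card_pair hp01, Fintype.card_fin, Nat.cast_ofNat] at hlow
  have hN : (0 : ℝ) < N := by exact_mod_cast (p 0).pos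
  have hhigh := hdens v hv hvc
  field_simp at hlow hhigh
  linarith

/-- Suppose the positive integers are partitioned into infinite sets
`U 1, …, U N` such that for each pair `p ≠ q` there is either an infinite
matching of `[U p, U q]`-edges of colour `r + 1` or a finite vertex set meeting
all such edges; suppose moreover that every directed path of colour `r + 1` has
upper density at most `1 / N`, and each `U p` has upper density exactly `1 / N`
and spans a complete symmetric digraph of colour `r + 1`. Then the complement
(within `K⃗_N`) of the auxiliary digraph — which has an edge `(U p, U q)` when
after deleting finitely many vertices every remaining `[U p, U q]`-edge has a
colour in `{1, …, r}` — contains no directed cycle. -/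
theorem stmt16 (r N : ℕ) (hN : 0 < N) (c : ℕ → ℕ → Fin (r + 1))
    (U : Fin N → Set ℕ)
    (hpart : ∀ n : ℕ, ∃! p : Fin N, n ∈ U p)
    (hinf : ∀ p, (U p).Infinite)
    (hmatch : ∀ p q : Fin N, p ≠ q →
      (∃ a b : ℕ → ℕ, Function.Injective a ∧ Function.Injective b ∧
        ∀ i : ℕ, a i ∈ U p ∧ b i ∈ U q ∧ c (a i) (b i) = Fin.last r) ∨
      (∃ F : Finset ℕ, ∀ x ∈ U p, ∀ y ∈ U q,
        c x y = Fin.last r → x ∈ F ∨ y ∈ F))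
    (hdens : ∀ v : ℕ → ℕ, Function.Injective v →
      (∀ i : ℕ, c (v i) (v (i + 1)) = Fin.last r) →
      upperDensity (Set.range v) ≤ 1 / N)
    (hUdens : ∀ p, upperDensity (U p) = 1 / N)
    (hclique : ∀ p, ∀ x ∈ U p, ∀ y ∈ U p, x ≠ y → c x y = Fin.last r) :
    ¬HasCycle (fun p q : Fin N =>
      p ≠ q ∧ ¬∃ F : Finset ℕ, ∀ x ∈ U p, ∀ y ∈ U q,
        x ∉ F → y ∉ F → c x y ≠ Fin.last r) :=
  stmt16_general r N c U hpart hmatch hdens hUdens hclique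
end
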